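/- If (C,T,D,W) is a subtype of (C,T,D',W') (i.e., every schedule satisfying the first satisfies the second), then D/W ≤ D'/W', i.e., D·W' ≤ D'·W. -/

import Mathlib

/-!
The periodic schedule that serves all of the first `W - D` windows of every block of `W`
windows (and nothing else) satisfies `(C,T,D,W)` with equality. By subtyping it satisfies
`(C,T,D',W')`, so each of the `W` consecutive `W'`-blocks covering the first `W * W'` windows
contains at least `W' - D'` good windows, while that stretch contains exactly `W' * (W - D)` good
windows. Hence `W * (W' - D') ≤ W' * (W - D)`, i.e. `D * W' ≤ D' * W`.
-/

/-- Indicator: interval [m, m+T−1] receives at least C units. -/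
def A (C T : ℕ) (α : ℕ → ℕ) (m : ℕ) : ℕ :=
  if C ≤ ∑ i ∈ Finset.range T, α (m + i) then 1 else 0

/-- α satisfies SLA (C,T,D,W). -/
def SatW (C T D W : ℕ) (α : ℕ → ℕ) : Prop :=
  ∀ Q : ℕ, W - D ≤ ∑ j ∈ Finset.range W, A C T α (Q * (W * T) + j * T)

open Finset

lemma Finset.sum_range_mul_eq_sum_sum {M : Type*} [AddCommMonoid M] (g : ℕ → M) (a b : ℕ) :
    ∑ n ∈ range (a * b), g n = ∑ i ∈ range a, ∑ j ∈ range b, g (i * b + j) := by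
  induction a with
  | zero => simp
  | succ a ih => rw [sum_range_succ, ← ih, Nat.succ_mul, sum_range_add]

lemma sum_range_ite_lt (G W : ℕ) : ∑ j ∈ range W, (if j < G then 1 else 0) = min G W := by
  have hfilter : {j ∈ range W | j < G} = range (min G W) := by
    ext j
    simp only [mem_filter, mem_range]
    omega
  rw [sum_boole, hfilter, card_range, Nat.cast_id]

lemma sum_range_ite_mod_lt (G W Q : ℕ) :
    ∑ j ∈ range W, (if (Q * W + j) % W < G then 1 else 0) = min G W := by
  rw [← sum_range_ite_lt G W]
  refine sum_congr rfl fun j hj => ?_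
  rw [Nat.mul_add_mod', Nat.mod_eq_of_lt (mem_range.mp hj)]

lemma sum_range_mul_ite_mod_lt (G W n : ℕ) :
    ∑ k ∈ range (n * W), (if k % W < G then 1 else 0) = n * min G W := by
  simp only [sum_range_mul_eq_sum_sum, sum_range_ite_mod_lt, sum_const, card_range, smul_eq_mul]

lemma satW_iff (C T D W : ℕ) (α : ℕ → ℕ) :
    SatW C T D W α ↔ ∀ Q, W - D ≤ ∑ j ∈ range W, A C T α ((Q * W + j) * T) := by
  have hidx : ∀ Q j, Q * (W * T) + j * T = (Q * W + j) * T := fun _ _ => by ring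
  simp only [SatW, hidx]

lemma mul_le_sum_of_satW {C T D W : ℕ} {α : ℕ → ℕ} (h : SatW C T D W α) (n : ℕ) :
    n * (W - D) ≤ ∑ k ∈ range (n * W), A C T α (k * T) := by
  calc n * (W - D) = ∑ _Q ∈ range n, (W - D) := by simp
    _ ≤ ∑ Q ∈ range n, ∑ j ∈ range W, A C T α ((Q * W + j) * T) :=
      sum_le_sum fun Q _ => (satW_iff C T D W α).mp h Q
    _ = ∑ k ∈ range (n * W), A C T α (k * T) := by
      rw [sum_range_mul_eq_sum_sum]

def periodicSchedule (T W G : ℕ) (n : ℕ) : ℕ :=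
  if n / T % W < G then 1 else 0

lemma periodicSchedule_le_one (T W G n : ℕ) : periodicSchedule T W G n ≤ 1 := by
  unfold periodicSchedule
  split_ifs <;> omega

lemma A_periodicSchedule {C T : ℕ} (hC : 1 ≤ C) (hCT : C ≤ T) (W G k : ℕ) :
    A C T (periodicSchedule T W G) (k * T) = if k % W < G then 1 else 0 := by
  have hslot : ∀ i ∈ range T, periodicSchedule T W G (k * T + i) = if k % W < G then 1 else 0 := by
    intro i hi
    have hdiv : (k * T + i) / T = k := by
      rw [mul_comm, Nat.mul_add_div (by omega), Nat.div_eq_of_lt (mem_range.mp hi), add_zero]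
    rw [periodicSchedule, hdiv]
  unfold A
  rw [sum_congr rfl hslot]
  split_ifs <;> simp_all

lemma satW_periodicSchedule {C T : ℕ} (hC : 1 ≤ C) (hCT : C ≤ T) (D W : ℕ) :
    SatW C T D W (periodicSchedule T W (W - D)) := by
  rw [satW_iff]
  intro Q
  simp only [A_periodicSchedule hC hCT, sum_range_ite_mod_lt]
  omega

theorem stmt_10_general (C T D W D' W' : ℕ)
    (hC1 : 1 ≤ C) (hCT : C ≤ T) (hDW : D ≤ W)
    (hsub : ∀ α : ℕ → ℕ, (∀ n, α n ≤ 1) → SatW C T D W α → SatW C T D' W' α) :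
    D * W' ≤ D' * W := by
  set α := periodicSchedule T W (W - D)
  have hsat' : SatW C T D' W' α :=
    hsub α (periodicSchedule_le_one T W _) (satW_periodicSchedule hC1 hCT D W)
  have hcount : ∑ k ∈ range (W * W'), A C T α (k * T) = W' * (W - D) := by
    rw [mul_comm, sum_congr rfl fun k _ => A_periodicSchedule hC1 hCT W (W - D) k,
      sum_range_mul_ite_mod_lt, min_eq_left (Nat.sub_le W D)]
  have hle : W * (W' - D') ≤ W' * (W - D) := hcount ▸ mul_le_sum_of_satW hsat' W
  rcases le_or_gt D' W' with hD' | hD'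
  · zify [hD', hDW] at hle
    linarith
  · nlinarith

/-- subtyping (C,T,D,W) ⊲ (C,T,D',W') implies D·W' ≤ D'·W. -/
theorem stmt_10 (C T D W D' W' : ℕ)
    (hC1 : 1 ≤ C) (hCT : C ≤ T) (hDW : D ≤ W) (hD'W' : D' ≤ W')
    (hW : 1 ≤ W) (hW' : 1 ≤ W')
    (hsub : ∀ α : ℕ → ℕ, (∀ n, α n ≤ 1) → SatW C T D W α → SatW C T D' W' α) :
    D * W' ≤ D' * W :=
  stmt_10_general C T D W D' W' hC1 hCT hDW hsub
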